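/- The ratio of the best stationary-policy expected NSW to the optimal (non-stationary) expected NSW can be as small as 1/n: in the MOMDP of the previous example, sup over stationary policies of expected NSW equals 1/n while the optimum over all policies equals 1, so stationary policies cannot guarantee any approximation factor better than 1/n, which tends to 0 as n → ∞. -/
import Mathlib


noncomputable def NSW {n : ℕ} (v : Fin n → ℝ) : ℝ :=
  (∏ k, v k) ^ ((1 : ℝ) / n)

noncomputable def ret {n : ℕ} (i j : Fin n) : Fin n → ℝ :=
  fun k => (if k = i then (1 : ℝ) else 0) + 1 - (if k = j then (1 : ℝ) else 0)

/-- Expected NSW of a stationary (randomized, history-independent) policy `p`. -/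
noncomputable def statVal {n : ℕ} (p : Fin n → ℝ) : ℝ :=
  ∑ i, (1 / n : ℝ) * ∑ j, p j * NSW (ret i j)

/-- Expected NSW of a history-dependent (non-stationary) policy `f`, which may
condition the chosen action on nature's draw `i`. -/
noncomputable def nonstatVal {n : ℕ} (f : Fin n → Fin n) : ℝ :=
  ∑ i, (1 / n : ℝ) * NSW (ret i (f i))

lemma NSW_ret {n : ℕ} (hn : 0 < n) (i j : Fin n) :
    NSW (ret i j) = if i = j then 1 else 0 := by
  unfold NSW ret
  by_cases h : i = j
  · subst h
    simp
  · rw [if_neg h, Finset.prod_eq_zero (Finset.mem_univ j)]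
    · exact Real.zero_rpow (one_div_ne_zero (Nat.cast_ne_zero.mpr hn.ne'))
    · simp [Ne.symm h]

lemma statVal_eq {n : ℕ} (hn : 0 < n) (p : Fin n → ℝ) (hp : ∑ j, p j = 1) :
    statVal p = 1 / n := by
  unfold statVal
  simp only [NSW_ret hn, mul_ite, mul_one, mul_zero, Finset.sum_ite_eq, Finset.mem_univ,
    if_true]
  rw [← Finset.mul_sum, hp, mul_one]

theorem stationary_approximation_gap {n : ℕ} (hn : 0 < n) :
    -- the supremum over stationary policies of expected NSW equals 1/n
    IsGreatest {x | ∃ p : Fin n → ℝ, (∀ j, 0 ≤ p j) ∧ (∑ j, p j = 1) ∧ x = statVal p}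
      (1 / n : ℝ) ∧
    -- while the optimum over all (non-stationary) policies equals 1
    IsGreatest {x | ∃ f : Fin n → Fin n, x = nonstatVal f} 1 := by
  have hn' : (0:ℝ) < n := Nat.cast_pos.mpr hn
  constructor
  · constructor
    · refine ⟨fun _ => 1 / n, fun j => by positivity, ?_, ?_⟩
      · simp [Finset.card_univ, mul_one_div]
        field_simp
      · rw [statVal_eq hn]
        simp [Finset.card_univ, mul_one_div]
        field_simp
    · rintro x ⟨p, _, hp1, rfl⟩
      rw [statVal_eq hn p hp1]
  · constructor
    · refine ⟨id, ?_⟩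
      unfold nonstatVal
      simp only [id, NSW_ret hn, if_pos rfl, mul_one]
      simp [Finset.card_univ]
      field_simp
    · rintro x ⟨f, rfl⟩
      unfold nonstatVal
      calc ∑ i, (1 / n : ℝ) * NSW (ret i (f i)) ≤ ∑ i : Fin n, (1 / n : ℝ) := by
            apply Finset.sum_le_sum
            intro i _
            rw [NSW_ret hn]
            split <;> simp [le_of_lt hn', one_div_nonneg.mpr hn'.le]
        _ = 1 := by
            simp [Finset.card_univ]
            field_simp
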